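/- Let Q₀ be a J-normal projection on a Krein space (H,J), with E₀ = Q₀Q₀^#, P₀ = Q₀(I − Q₀^#), F₀ = (I − Q₀)(I − Q₀)^#. Define P: L(H) → L(H) by P(X) = E₀XE₀ + P₀XP₀ + P₀^#XP₀^# + F₀XF₀. Then P is a bounded projection (P² = P), it maps the real subspace u_J = {X : X^# = −X} into itself, and its restriction to u_J has range exactly g = {X ∈ u_J : XQ₀ = Q₀X}. -/
import Mathlib


open ContinuousLinearMap

variable {H : Type*} [NormedAddCommGroup H] [InnerProductSpace ℂ H] [CompleteSpace H]

/-- The `J`-adjoint `T^# = J T* J`. -/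
noncomputable def sharp (J T : H →L[ℂ] H) : H →L[ℂ] H :=
  J ∘L (ContinuousLinearMap.adjoint T) ∘L J

/-- The map `P(X) = E₀XE₀ + P₀XP₀ + P₀^#XP₀^# + F₀XF₀` associated to a `J`-normal
projection `Q₀`. -/
noncomputable def calP (J Q₀ X : H →L[ℂ] H) : H →L[ℂ] H :=
  (Q₀ ∘L sharp J Q₀) ∘L X ∘L (Q₀ ∘L sharp J Q₀) +
  (Q₀ ∘L (1 - sharp J Q₀)) ∘L X ∘L (Q₀ ∘L (1 - sharp J Q₀)) +
  sharp J (Q₀ ∘L (1 - sharp J Q₀)) ∘L X ∘L sharp J (Q₀ ∘L (1 - sharp J Q₀)) +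
  ((1 - Q₀) ∘L sharp J (1 - Q₀)) ∘L X ∘L ((1 - Q₀) ∘L sharp J (1 - Q₀))

lemma sharp_comp' (J A B : H →L[ℂ] H) (hJ2 : J ∘L J = 1) :
    sharp J (A * B) = sharp J B * sharp J A := by
  have hJ2' : ∀ x : H →L[ℂ] H, J * (J * x) = x := by
    intro x; rw [← mul_assoc]; rw [show J * J = 1 from hJ2, one_mul]
  show J * (adjoint (A ∘L B) * J) = (J * (adjoint B * J)) * (J * (adjoint A * J))
  rw [adjoint_comp]
  show J * ((adjoint B * adjoint A) * J) = _
  simp only [mul_assoc, hJ2']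

lemma sharp_sharp' (J T : H →L[ℂ] H) (hJsa : ContinuousLinearMap.adjoint J = J)
    (hJ2 : J ∘L J = 1) : sharp J (sharp J T) = T := by
  have hJ2' : ∀ x : H →L[ℂ] H, J * (J * x) = x := by
    intro x; rw [← mul_assoc]; rw [show J * J = 1 from hJ2, one_mul]
  show J * (adjoint (J ∘L (adjoint T ∘L J)) * J) = T
  rw [adjoint_comp, adjoint_comp, hJsa, adjoint_adjoint]
  show J * ((J * (T * J)) * J) = T
  simp only [mul_assoc, hJ2']
  rw [show J * J = 1 from hJ2, mul_one]

lemma sharp_sub' (J A B : H →L[ℂ] H) : sharp J (A - B) = sharp J A - sharp J B := by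
  show J * (adjoint (A - B) * J) = J * (adjoint A * J) - J * (adjoint B * J)
  rw [map_sub, sub_mul, mul_sub]

lemma sharp_add' (J A B : H →L[ℂ] H) : sharp J (A + B) = sharp J A + sharp J B := by
  show J * (adjoint (A + B) * J) = J * (adjoint A * J) + J * (adjoint B * J)
  rw [map_add, add_mul, mul_add]

lemma sharp_one' (J : H →L[ℂ] H) (hJ2 : J ∘L J = 1) : sharp J 1 = 1 := by
  show J * (adjoint 1 * J) = 1
  rw [show (adjoint 1 : H →L[ℂ] H) = 1 from adjoint_id, one_mul]
  exact hJ2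

lemma proj_abstract {R : Type*} [Ring R] (a b c d : R)
    (haa : a*a=a) (hab : a*b=0) (hac : a*c=0) (had : a*d=0)
    (hba : b*a=0) (hbb : b*b=b) (hbc : b*c=0) (hbd : b*d=0)
    (hca : c*a=0) (hcb : c*b=0) (hcc : c*c=c) (hcd : c*d=0)
    (hda : d*a=0) (hdb : d*b=0) (hdc : d*c=0) (hdd : d*d=d) (X : R) :
    a*((a*(X*a)+b*(X*b)+c*(X*c)+d*(X*d))*a) +
    b*((a*(X*a)+b*(X*b)+c*(X*c)+d*(X*d))*b) +
    c*((a*(X*a)+b*(X*b)+c*(X*c)+d*(X*d))*c) +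
    d*((a*(X*a)+b*(X*b)+c*(X*c)+d*(X*d))*d) =
    a*(X*a)+b*(X*b)+c*(X*c)+d*(X*d) := by
  have quad : ∀ u v Y : R, u * ((v*(Y*v))*u) = (u*v)*(Y*(v*u)) := by
    intros; simp only [mul_assoc]
  simp only [add_mul, mul_add, quad, haa, hab, hac, had, hba, hbb, hbc, hbd,
    hca, hcb, hcc, hcd, hda, hdb, hdc, hdd, zero_mul, mul_zero, add_zero, zero_add]

lemma comm_abstract {R : Type*} [Ring R] (a b c d t X : R)
    (ha1 : a*t = a) (ha2 : t*a = a) (hb1 : b*t = b) (hb2 : t*b = b)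
    (hc1 : c*t = 0) (hc2 : t*c = 0) (hd1 : d*t = 0) (hd2 : t*d = 0) :
    (a*(X*a)+b*(X*b)+c*(X*c)+d*(X*d))*t = t*(a*(X*a)+b*(X*b)+c*(X*c)+d*(X*d)) := by
  have term1 : ∀ u : R, u*t = u → t*u = u → (u*(X*u))*t = t*(u*(X*u)) := by
    intro u h1 h2
    calc (u*(X*u))*t = u*(X*(u*t)) := by rw [mul_assoc, mul_assoc]
      _ = u*(X*u) := by rw [h1]
      _ = (t*u)*(X*u) := by rw [h2]
      _ = t*(u*(X*u)) := by rw [mul_assoc]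
  have term0 : ∀ u : R, u*t = 0 → t*u = 0 → (u*(X*u))*t = t*(u*(X*u)) := by
    intro u h1 h2
    calc (u*(X*u))*t = u*(X*(u*t)) := by rw [mul_assoc, mul_assoc]
      _ = 0 := by rw [h1, mul_zero, mul_zero]
      _ = t*(u*(X*u)) := by rw [← mul_assoc, h2, zero_mul]
  rw [add_mul, add_mul, add_mul, mul_add, mul_add, mul_add,
    term1 a ha1 ha2, term1 b hb1 hb2, term0 c hc1 hc2, term0 d hd1 hd2]

lemma range_abstract {R : Type*} [Ring R] (a b c d X : R) (hsum : a+b+c+d = 1)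
    (haa : a*a=a) (hbb : b*b=b) (hcc : c*c=c) (hdd : d*d=d)
    (hxa : X*a = a*X) (hxb : X*b = b*X) (hxc : X*c = c*X) (hxd : X*d = d*X) :
    a*(X*a)+b*(X*b)+c*(X*c)+d*(X*d) = X := by
  have h : ∀ u : R, u*u=u → X*u = u*X → u*(X*u) = u*X := by
    intro u hu hx
    rw [hx, ← mul_assoc, hu]
  rw [h a haa hxa, h b hbb hxb, h c hcc hxc, h d hdd hxd,
    ← add_mul, ← add_mul, ← add_mul, hsum, one_mul]

set_option maxHeartbeats 1600000 in
/-- `calP` is a bounded projection mapping `u_J` into itself, whose restriction to `u_J` has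
range `g = {X ∈ u_J : XQ₀ = Q₀X}`. -/
theorem stmt14 (J Q₀ : H →L[ℂ] H)
    (hJsa : ContinuousLinearMap.adjoint J = J) (hJ2 : J ∘L J = 1)
    (hQ₀ : Q₀ ∘L Q₀ = Q₀) (hQ₀n : Q₀ ∘L sharp J Q₀ = sharp J Q₀ ∘L Q₀) :
    (∀ X, calP J Q₀ (calP J Q₀ X) = calP J Q₀ X) ∧
    (∃ C : ℝ, ∀ X, ‖calP J Q₀ X‖ ≤ C * ‖X‖) ∧
    (∀ X, sharp J X = -X →
      sharp J (calP J Q₀ X) = -(calP J Q₀ X) ∧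
      calP J Q₀ X ∘L Q₀ = Q₀ ∘L calP J Q₀ X) ∧
    (∀ X, sharp J X = -X → X ∘L Q₀ = Q₀ ∘L X → calP J Q₀ X = X) := by
  have hq : Q₀ * Q₀ = Q₀ := hQ₀
  have hc : Q₀ * sharp J Q₀ = sharp J Q₀ * Q₀ := hQ₀n
  have hss : sharp J (sharp J Q₀) = Q₀ := sharp_sharp' J Q₀ hJsa hJ2
  have hs : sharp J Q₀ * sharp J Q₀ = sharp J Q₀ := by
    rw [← sharp_comp' J Q₀ Q₀ hJ2, show Q₀ * Q₀ = Q₀ from hQ₀]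
  have h1s : sharp J (1 - sharp J Q₀) = 1 - Q₀ := by
    rw [sharp_sub', sharp_one' J hJ2, hss]
  have h1q : sharp J (1 - Q₀) = 1 - sharp J Q₀ := by
    rw [sharp_sub', sharp_one' J hJ2]
  have hP3 : sharp J (Q₀ ∘L (1 - sharp J Q₀)) = (1 - Q₀) * sharp J Q₀ := by
    rw [show Q₀ ∘L (1 - sharp J Q₀) = Q₀ * (1 - sharp J Q₀) from rfl,
      sharp_comp' J _ _ hJ2, h1s]
  have hrw : ∀ X, calP J Q₀ X =
      (Q₀ * sharp J Q₀) * (X * (Q₀ * sharp J Q₀)) +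
      (Q₀ * (1 - sharp J Q₀)) * (X * (Q₀ * (1 - sharp J Q₀))) +
      ((1 - Q₀) * sharp J Q₀) * (X * ((1 - Q₀) * sharp J Q₀)) +
      ((1 - Q₀) * (1 - sharp J Q₀)) * (X * ((1 - Q₀) * (1 - sharp J Q₀))) := by
    intro X
    rw [calP, hP3, h1q]
    rfl
  have hq' : ∀ x : H →L[ℂ] H, Q₀ * (Q₀ * x) = Q₀ * x := fun x => by rw [← mul_assoc, hq]
  have hs' : ∀ x : H →L[ℂ] H, sharp J Q₀ * (sharp J Q₀ * x) = sharp J Q₀ * x :=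
    fun x => by rw [← mul_assoc, hs]
  have hsq : sharp J Q₀ * Q₀ = Q₀ * sharp J Q₀ := hc.symm
  have hc' : ∀ x : H →L[ℂ] H, sharp J Q₀ * (Q₀ * x) = Q₀ * (sharp J Q₀ * x) :=
    fun x => by rw [← mul_assoc, hsq, mul_assoc]
  have haa : (Q₀ * sharp J Q₀) * (Q₀ * sharp J Q₀) = (Q₀ * sharp J Q₀) := by
    simp only [mul_sub, sub_mul, mul_one, one_mul, mul_assoc, hq, hs, hq', hs', hc', hsq]
    try abel
  have hab : (Q₀ * sharp J Q₀) * (Q₀ * (1 - sharp J Q₀)) = 0 := by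
    simp only [mul_sub, sub_mul, mul_one, one_mul, mul_assoc, hq, hs, hq', hs', hc', hsq]
    try abel
  have hac : (Q₀ * sharp J Q₀) * ((1 - Q₀) * sharp J Q₀) = 0 := by
    simp only [mul_sub, sub_mul, mul_one, one_mul, mul_assoc, hq, hs, hq', hs', hc', hsq]
    try abel
  have had : (Q₀ * sharp J Q₀) * ((1 - Q₀) * (1 - sharp J Q₀)) = 0 := by
    simp only [mul_sub, sub_mul, mul_one, one_mul, mul_assoc, hq, hs, hq', hs', hc', hsq]
    try abel
  have hba : (Q₀ * (1 - sharp J Q₀)) * (Q₀ * sharp J Q₀) = 0 := by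
    simp only [mul_sub, sub_mul, mul_one, one_mul, mul_assoc, hq, hs, hq', hs', hc', hsq]
    try abel
  have hbb : (Q₀ * (1 - sharp J Q₀)) * (Q₀ * (1 - sharp J Q₀)) = (Q₀ * (1 - sharp J Q₀)) := by
    simp only [mul_sub, sub_mul, mul_one, one_mul, mul_assoc, hq, hs, hq', hs', hc', hsq]
    try abel
  have hbc : (Q₀ * (1 - sharp J Q₀)) * ((1 - Q₀) * sharp J Q₀) = 0 := by
    simp only [mul_sub, sub_mul, mul_one, one_mul, mul_assoc, hq, hs, hq', hs', hc', hsq]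
    try abel
  have hbd : (Q₀ * (1 - sharp J Q₀)) * ((1 - Q₀) * (1 - sharp J Q₀)) = 0 := by
    simp only [mul_sub, sub_mul, mul_one, one_mul, mul_assoc, hq, hs, hq', hs', hc', hsq]
    try abel
  have hca : ((1 - Q₀) * sharp J Q₀) * (Q₀ * sharp J Q₀) = 0 := by
    simp only [mul_sub, sub_mul, mul_one, one_mul, mul_assoc, hq, hs, hq', hs', hc', hsq]
    try abel
  have hcb : ((1 - Q₀) * sharp J Q₀) * (Q₀ * (1 - sharp J Q₀)) = 0 := by
    simp only [mul_sub, sub_mul, mul_one, one_mul, mul_assoc, hq, hs, hq', hs', hc', hsq]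
    try abel
  have hcc : ((1 - Q₀) * sharp J Q₀) * ((1 - Q₀) * sharp J Q₀) = ((1 - Q₀) * sharp J Q₀) := by
    simp only [mul_sub, sub_mul, mul_one, one_mul, mul_assoc, hq, hs, hq', hs', hc', hsq]
    try abel
  have hcd : ((1 - Q₀) * sharp J Q₀) * ((1 - Q₀) * (1 - sharp J Q₀)) = 0 := by
    simp only [mul_sub, sub_mul, mul_one, one_mul, mul_assoc, hq, hs, hq', hs', hc', hsq]
    try abel
  have hda : ((1 - Q₀) * (1 - sharp J Q₀)) * (Q₀ * sharp J Q₀) = 0 := by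
    simp only [mul_sub, sub_mul, mul_one, one_mul, mul_assoc, hq, hs, hq', hs', hc', hsq]
    try abel
  have hdb : ((1 - Q₀) * (1 - sharp J Q₀)) * (Q₀ * (1 - sharp J Q₀)) = 0 := by
    simp only [mul_sub, sub_mul, mul_one, one_mul, mul_assoc, hq, hs, hq', hs', hc', hsq]
    try abel
  have hdc : ((1 - Q₀) * (1 - sharp J Q₀)) * ((1 - Q₀) * sharp J Q₀) = 0 := by
    simp only [mul_sub, sub_mul, mul_one, one_mul, mul_assoc, hq, hs, hq', hs', hc', hsq]
    try abel
  have hdd : ((1 - Q₀) * (1 - sharp J Q₀)) * ((1 - Q₀) * (1 - sharp J Q₀)) = ((1 - Q₀) * (1 - sharp J Q₀)) := by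
    simp only [mul_sub, sub_mul, mul_one, one_mul, mul_assoc, hq, hs, hq', hs', hc', hsq]
    try abel
  have haq1 : (Q₀ * sharp J Q₀) * Q₀ = (Q₀ * sharp J Q₀) := by
    simp only [mul_sub, sub_mul, mul_one, one_mul, mul_assoc, hq, hs, hq', hs', hc', hsq]
    try abel
  have haq2 : Q₀ * (Q₀ * sharp J Q₀) = (Q₀ * sharp J Q₀) := by
    simp only [mul_sub, sub_mul, mul_one, one_mul, mul_assoc, hq, hs, hq', hs', hc', hsq]
    try abel
  have hbq1 : (Q₀ * (1 - sharp J Q₀)) * Q₀ = (Q₀ * (1 - sharp J Q₀)) := by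
    simp only [mul_sub, sub_mul, mul_one, one_mul, mul_assoc, hq, hs, hq', hs', hc', hsq]
    try abel
  have hbq2 : Q₀ * (Q₀ * (1 - sharp J Q₀)) = (Q₀ * (1 - sharp J Q₀)) := by
    simp only [mul_sub, sub_mul, mul_one, one_mul, mul_assoc, hq, hs, hq', hs', hc', hsq]
    try abel
  have hcq1 : ((1 - Q₀) * sharp J Q₀) * Q₀ = 0 := by
    simp only [mul_sub, sub_mul, mul_one, one_mul, mul_assoc, hq, hs, hq', hs', hc', hsq]
    try abel
  have hcq2 : Q₀ * ((1 - Q₀) * sharp J Q₀) = 0 := by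
    simp only [mul_sub, sub_mul, mul_one, one_mul, mul_assoc, hq, hs, hq', hs', hc', hsq]
    try abel
  have hdq1 : ((1 - Q₀) * (1 - sharp J Q₀)) * Q₀ = 0 := by
    simp only [mul_sub, sub_mul, mul_one, one_mul, mul_assoc, hq, hs, hq', hs', hc', hsq]
    try abel
  have hdq2 : Q₀ * ((1 - Q₀) * (1 - sharp J Q₀)) = 0 := by
    simp only [mul_sub, sub_mul, mul_one, one_mul, mul_assoc, hq, hs, hq', hs', hc', hsq]
    try abel
  refine ⟨?_, ?_, ?_, ?_⟩
  · -- projection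
    intro X
    rw [hrw (calP J Q₀ X), hrw X]
    exact proj_abstract _ _ _ _ haa hab hac had hba hbb hbc hbd
      hca hcb hcc hcd hda hdb hdc hdd X
  · -- boundedness
    refine ⟨‖Q₀ * sharp J Q₀‖ * ‖Q₀ * sharp J Q₀‖ +
      ‖Q₀ * (1 - sharp J Q₀)‖ * ‖Q₀ * (1 - sharp J Q₀)‖ +
      ‖(1 - Q₀) * sharp J Q₀‖ * ‖(1 - Q₀) * sharp J Q₀‖ +
      ‖(1 - Q₀) * (1 - sharp J Q₀)‖ * ‖(1 - Q₀) * (1 - sharp J Q₀)‖, fun X => ?_⟩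
    rw [hrw X]
    have key : ∀ a : H →L[ℂ] H, ‖a * (X * a)‖ ≤ ‖a‖ * ‖a‖ * ‖X‖ := by
      intro a
      calc ‖a * (X * a)‖ ≤ ‖a‖ * ‖X * a‖ := norm_mul_le _ _
        _ ≤ ‖a‖ * (‖X‖ * ‖a‖) := by
            gcongr
            exact norm_mul_le _ _
        _ = ‖a‖ * ‖a‖ * ‖X‖ := by ring
    have h1 := key (Q₀ * sharp J Q₀)
    have h2 := key (Q₀ * (1 - sharp J Q₀))
    have h3 := key ((1 - Q₀) * sharp J Q₀)
    have h4 := key ((1 - Q₀) * (1 - sharp J Q₀))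
    have hsum : ∀ a b c d : H →L[ℂ] H, ‖a + b + c + d‖ ≤ ‖a‖ + ‖b‖ + ‖c‖ + ‖d‖ := by
      intro a b c d
      calc ‖a + b + c + d‖ ≤ ‖a + b + c‖ + ‖d‖ := norm_add_le _ _
        _ ≤ (‖a + b‖ + ‖c‖) + ‖d‖ := by gcongr; exact norm_add_le _ _
        _ ≤ ((‖a‖ + ‖b‖) + ‖c‖) + ‖d‖ := by gcongr; exact norm_add_le _ _
    refine le_trans (hsum _ _ _ _) ?_
    nlinarith [h1, h2, h3, h4]
  · -- maps u_J to itself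
    intro X hX
    constructor
    · have keyt : ∀ a : H →L[ℂ] H,
          sharp J (a * (X * a)) = -(sharp J a * (X * sharp J a)) := by
        intro a
        rw [sharp_comp' J _ _ hJ2, sharp_comp' J _ _ hJ2, hX]
        simp only [mul_neg, neg_mul, mul_assoc]
      have she : sharp J (Q₀ * sharp J Q₀) = Q₀ * sharp J Q₀ := by
        rw [sharp_comp' J _ _ hJ2, hss]
      have shp : sharp J (Q₀ * (1 - sharp J Q₀)) = (1 - Q₀) * sharp J Q₀ := by
        rw [sharp_comp' J _ _ hJ2, h1s]
      have shr : sharp J ((1 - Q₀) * sharp J Q₀) = Q₀ * (1 - sharp J Q₀) := by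
        rw [sharp_comp' J _ _ hJ2, hss, h1q]
      have shf : sharp J ((1 - Q₀) * (1 - sharp J Q₀)) = (1 - Q₀) * (1 - sharp J Q₀) := by
        rw [sharp_comp' J _ _ hJ2, h1s, h1q]
      rw [hrw X]
      simp only [sharp_add', keyt, she, shp, shr, shf]
      abel
    · show calP J Q₀ X * Q₀ = Q₀ * calP J Q₀ X
      rw [hrw X]
      exact comm_abstract _ _ _ _ _ _ haq1 haq2 hbq1 hbq2 hcq1 hcq2 hdq1 hdq2
  · -- range
    intro X hX hcomm
    have hxq : X * Q₀ = Q₀ * X := hcomm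
    have hxs : X * sharp J Q₀ = sharp J Q₀ * X := by
      have h := congrArg (sharp J) hxq
      rw [sharp_comp' J _ _ hJ2, sharp_comp' J _ _ hJ2, hX, neg_mul, mul_neg] at h
      exact (neg_inj.mp h).symm
    have hx1s : X * (1 - sharp J Q₀) = (1 - sharp J Q₀) * X := by
      rw [mul_sub, sub_mul, mul_one, one_mul, hxs]
    have hx1q : X * (1 - Q₀) = (1 - Q₀) * X := by
      rw [mul_sub, sub_mul, mul_one, one_mul, hxq]
    have hxa : X * (Q₀ * sharp J Q₀) = (Q₀ * sharp J Q₀) * X := by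
      rw [← mul_assoc, hxq, mul_assoc, hxs, ← mul_assoc]
    have hxb : X * (Q₀ * (1 - sharp J Q₀)) = (Q₀ * (1 - sharp J Q₀)) * X := by
      rw [← mul_assoc, hxq, mul_assoc, hx1s, ← mul_assoc]
    have hxc : X * ((1 - Q₀) * sharp J Q₀) = ((1 - Q₀) * sharp J Q₀) * X := by
      rw [← mul_assoc, hx1q, mul_assoc, hxs, ← mul_assoc]
    have hxd : X * ((1 - Q₀) * (1 - sharp J Q₀)) = ((1 - Q₀) * (1 - sharp J Q₀)) * X := by
      rw [← mul_assoc, hx1q, mul_assoc, hx1s, ← mul_assoc]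
    have hsum1 : (Q₀ * sharp J Q₀) + (Q₀ * (1 - sharp J Q₀)) + ((1 - Q₀) * sharp J Q₀) + ((1 - Q₀) * (1 - sharp J Q₀)) = 1 := by noncomm_ring
    rw [hrw X]
    exact range_abstract _ _ _ _ X hsum1 haa hbb hcc hdd hxa hxb hxc hxd
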